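/- Every tropical immersion h : Γ → ℝ² of a 3-valent graph Γ of genus g with x ends is regular: the space of tropical curves of the same combinatorial type has dimension exactly x + g - 1. -/

import Mathlib

open Finset

/-- The space of parameterized tropical curves `h : Γ → ℝ²` in a fixed combinatorial
type: the graph `Γ` and the primitive direction vectors `dir` of the bounded edges are
fixed, and the curve is determined by the positions of the vertices. -/
def modOfType {V E : Type} (src tgt : E → V) (dir : E → Fin 2 → ℤ) :
    Set (V → Fin 2 → ℝ) :=
  {pos | ∀ e : E, ∃ t : ℝ, 0 < t ∧
    ∀ i, pos (tgt e) i - pos (src e) i = t * (dir e i : ℝ)}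

/-!
Inside the kernel `A` of the linear map sending vertex positions to the components of the edge
vectors transverse to their prescribed directions, the curves of the given type are cut out by
the open conditions that every edge vector points forward, so they form a convex open subset
of `A`. As `2|E| + |L| = 3|V|` for a trivalent graph, `dim A = x + g - 1` amounts to that map
being surjective, i.e. to the absence of a nonzero `a : E → ℝ` whose edge vectors `a e • dir e`
balance at every vertex. Given such an `a`, take a linear form `ℓ` vanishing on no direction and
a vertex `v` of the support of `a` of maximal height `ℓ ∘ pos`: every supported germ at `v` points
downwards. If all three germs at `v` are supported, this contradicts the balancing condition of
the curve; otherwise a nontrivial linear relation between at most two primitive downward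
directions forces two of them to coincide, which an immersion does not allow.
-/

def IsPrimitive {n : Type*} (d : n → ℤ) : Prop :=
  ∀ c : ℤ, (∀ i, c ∣ d i) → IsUnit c

def castVec {n : Type*} : (n → ℤ) →+ (n → ℝ) :=
  (Int.castAddHom ℝ).compLeft n

@[simp]
lemma castVec_apply {n : Type*} (d : n → ℤ) (i : n) : castVec d i = d i := rfl

lemma castVec_injective {n : Type*} : Function.Injective (castVec (n := n)) :=
  fun _ _ h => funext fun i => by simpa using congrFun h i

namespace IsPrimitive

variable {n : Type*} {d d₁ d₂ : n → ℤ}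

lemma neg (h : IsPrimitive d) : IsPrimitive (-d) :=
  fun c hc => h c fun i => by simpa using hc i

lemma ne_zero (h : IsPrimitive d) : d ≠ 0 := by
  rintro rfl
  exact not_isUnit_zero (h 0 fun _ => dvd_refl 0)

lemma castVec_ne_zero (h : IsPrimitive d) : castVec d ≠ 0 :=
  (map_ne_zero_iff _ castVec_injective).mpr h.ne_zero

lemma isUnit_of_eq_smul {k : ℤ} (h₂ : IsPrimitive d₂) (h : d₂ = k • d₁) : IsUnit k :=
  h₂ k fun i => by simp [h]

lemma isCoprime {d : Fin 2 → ℤ} (h : IsPrimitive d) : IsCoprime (d 0) (d 1) :=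
  isRelPrime_iff_isCoprime.mp fun c h₀ h₁ => h c (Fin.forall_fin_two.mpr ⟨h₀, h₁⟩)

lemma exists_eq_smul_of_cross_eq_zero {d₁ d₂ : Fin 2 → ℤ} (h₁ : IsPrimitive d₁)
    (hcross : d₁ 0 * d₂ 1 = d₁ 1 * d₂ 0) : ∃ k : ℤ, d₂ = k • d₁ := by
  obtain ⟨α, β, hαβ⟩ := h₁.isCoprime
  refine ⟨α * d₂ 0 + β * d₂ 1, funext fun i => ?_⟩
  fin_cases i
  · simp only [Fin.zero_eta, Fin.isValue, Pi.smul_apply, smul_eq_mul]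
    linear_combination (-d₂ 0) * hαβ - β * hcross
  · simp only [Fin.mk_one, Fin.isValue, Pi.smul_apply, smul_eq_mul]
    linear_combination (-d₂ 1) * hαβ + α * hcross

lemma eq_of_sameRay {d₁ d₂ : Fin 2 → ℤ} (h₁ : IsPrimitive d₁) (h₂ : IsPrimitive d₂)
    (h : SameRay ℝ (castVec d₁) (castVec d₂)) : d₁ = d₂ := by
  obtain ⟨r, -, hr⟩ := h.exists_nonneg_left h₁.castVec_ne_zero
  have hcross : d₁ 0 * d₂ 1 = d₁ 1 * d₂ 0 := by
    have h0 := congrFun hr 0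
    have h1 := congrFun hr 1
    simp only [Pi.smul_apply, castVec_apply, smul_eq_mul] at h0 h1
    have : (d₁ 0 * d₂ 1 : ℝ) = d₁ 1 * d₂ 0 := by rw [← h0, ← h1]; ring
    exact_mod_cast this
  obtain ⟨k, rfl⟩ := h₁.exists_eq_smul_of_cross_eq_zero hcross
  rcases Int.isUnit_iff.mp (h₂.isUnit_of_eq_smul rfl) with rfl | rfl
  · rw [one_smul]
  · rw [neg_one_smul, map_neg] at h
    exact absurd (eq_zero_of_sameRay_self_neg h) h₁.castVec_ne_zero

end IsPrimitive

section HalfSpace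

variable {ι M : Type*} [AddCommGroup M] [Module ℝ M] (ℓ : M →ₗ[ℝ] ℝ) {u : ι → M}

lemma LinearMap.map_lt_zero_of_sub_eq_smul {p q x : M} {t : ℝ} (ht : 0 < t) (h : q - p = t • x)
    (hle : ℓ q ≤ ℓ p) (hx : ℓ x ≠ 0) : ℓ x < 0 := by
  have : t * ℓ x ≤ 0 := by rw [← smul_eq_mul, ← map_smul, ← h, map_sub]; linarith
  exact lt_of_le_of_ne (nonpos_of_mul_nonpos_right this ht) hx

lemma sum_nsmul_ne_zero_of_map_lt_zero {T : Finset ι} (hT : T.Nonempty) {w : ι → ℕ}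
    (hw : ∀ γ ∈ T, 0 < w γ) (hℓ : ∀ γ ∈ T, ℓ (u γ) < 0) : ∑ γ ∈ T, w γ • u γ ≠ 0 := by
  intro h
  have hneg : ℓ (∑ γ ∈ T, w γ • u γ) < 0 := by
    rw [map_sum]
    refine sum_neg (fun γ hγ => ?_) hT
    rw [map_nsmul, nsmul_eq_mul]
    exact mul_neg_of_pos_of_neg (by exact_mod_cast hw γ hγ) (hℓ γ hγ)
  simp [h] at hneg

lemma sameRay_of_smul_add_smul_eq_zero {x y : M} (hx : ℓ x < 0) (hy : ℓ y < 0) {a b : ℝ}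
    (hb : b ≠ 0) (h : a • x + b • y = 0) : SameRay ℝ x y := by
  have hyx : y = (-a / b) • x := by
    rw [div_eq_inv_mul, mul_smul, neg_smul, ← eq_neg_of_add_eq_zero_right h, inv_smul_smul₀ hb]
  have hpos : 0 < -a / b := by
    have hℓy := congrArg ℓ hyx
    rw [map_smul, smul_eq_mul] at hℓy
    exact pos_of_mul_neg_left (hℓy ▸ hy) hx.le
  rw [hyx]
  exact SameRay.sameRay_nonneg_smul_right x hpos.le

lemma eq_empty_of_sum_smul_eq_zero {S : Finset ι} (hS : #S ≤ 2) (hℓ : ∀ γ ∈ S, ℓ (u γ) < 0)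
    (hray : ∀ γ₁ ∈ S, ∀ γ₂ ∈ S, SameRay ℝ (u γ₁) (u γ₂) → γ₁ = γ₂) {b : ι → ℝ}
    (hb : ∀ γ ∈ S, b γ ≠ 0) (hsum : ∑ γ ∈ S, b γ • u γ = 0) : S = ∅ := by
  classical
  obtain hS | hS | hS : #S = 0 ∨ #S = 1 ∨ #S = 2 := by omega
  · exact card_eq_zero.mp hS
  · obtain ⟨γ, rfl⟩ := card_eq_one.mp hS
    rw [sum_singleton, smul_eq_zero] at hsum
    have hu := hsum.resolve_left (hb γ (mem_singleton_self γ))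
    simpa [hu] using hℓ γ (mem_singleton_self γ)
  · obtain ⟨γ₁, γ₂, hne, rfl⟩ := card_eq_two.mp hS
    rw [sum_pair hne] at hsum
    simp only [mem_insert, mem_singleton, forall_eq_or_imp, forall_eq] at hℓ hray hb
    exact absurd (hray.1.2 (sameRay_of_smul_add_smul_eq_zero ℓ hℓ.1 hℓ.2 hb.2 hsum)) hne

lemma eq_zero_of_sum_smul_eq_zero_of_card_le_three {T : Finset ι} (hT : #T ≤ 3)
    (hray : ∀ γ₁ ∈ T, ∀ γ₂ ∈ T, SameRay ℝ (u γ₁) (u γ₂) → γ₁ = γ₂)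
    {w : ι → ℕ} (hw : ∀ γ ∈ T, 0 < w γ) (hbal : ∑ γ ∈ T, w γ • u γ = 0)
    {b : ι → ℝ} (hb : ∑ γ ∈ T, b γ • u γ = 0) (hℓ : ∀ γ ∈ T, b γ ≠ 0 → ℓ (u γ) < 0) :
    ∀ γ ∈ T, b γ = 0 := by
  classical
  set S := T.filter (b · ≠ 0) with hS
  have hST : S ⊆ T := filter_subset _ T
  suffices S = ∅ by simpa [hS, filter_eq_empty_iff] using this
  by_cases hfull : S = T
  · by_contra hne
    refine sum_nsmul_ne_zero_of_map_lt_zero ℓ (hfull ▸ nonempty_iff_ne_empty.mpr hne) hw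
      (fun γ hγ => hℓ γ hγ ?_) hbal
    exact (mem_filter.mp (hfull ▸ hγ : γ ∈ S)).2
  · refine eq_empty_of_sum_smul_eq_zero ℓ ?_ (fun γ hγ => hℓ γ (hST hγ) (mem_filter.mp hγ).2)
      (fun γ₁ h₁ γ₂ h₂ => hray γ₁ (hST h₁) γ₂ (hST h₂)) (fun γ hγ => (mem_filter.mp hγ).2) ?_
    · have := card_lt_card (Finset.ssubset_iff_subset_ne.mpr ⟨hST, hfull⟩)
      omega
    · rwa [hS, sum_filter_of_ne fun γ _ h => left_ne_zero_of_smul h]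

end HalfSpace

section Plane

def perp : (Fin 2 → ℝ) →ₗ[ℝ] Fin 2 → ℝ := Matrix.mulVecLin !![0, 1; -1, 0]

lemma perp_dotProduct (x y : Fin 2 → ℝ) : perp x ⬝ᵥ y = x 1 * y 0 - x 0 * y 1 := by
  simp [perp, dotProduct, Fin.sum_univ_two, Matrix.mulVec, sub_eq_add_neg]

lemma perp_injective : Function.Injective perp :=
  Matrix.mulVec_injective_iff_isUnit.mpr <| (Matrix.isUnit_iff_isUnit_det _).mpr <| by
    simp [Matrix.det_fin_two_of]

lemma dotProduct_self_pos {n R : Type*} [Fintype n] [Ring R] [LinearOrder R]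
    [IsStrictOrderedRing R] {x : n → R} (hx : x ≠ 0) : 0 < x ⬝ᵥ x :=
  lt_of_le_of_ne (sum_nonneg fun i _ => mul_self_nonneg (x i))
    (Ne.symm (dotProduct_self_eq_zero.not.mpr hx))

lemma exists_pos_smul_eq_iff {x y : Fin 2 → ℝ} (hy : y ≠ 0) :
    (∃ t : ℝ, 0 < t ∧ x = t • y) ↔ perp y ⬝ᵥ x = 0 ∧ 0 < y ⬝ᵥ x := by
  have hyy := dotProduct_self_pos hy
  constructor
  · rintro ⟨t, ht, rfl⟩
    refine ⟨?_, ?_⟩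
    · rw [perp_dotProduct, Pi.smul_apply, Pi.smul_apply, smul_eq_mul, smul_eq_mul]
      ring
    · rw [dotProduct_smul, smul_eq_mul]
      positivity
  · rintro ⟨hperp, hdot⟩
    refine ⟨(y ⬝ᵥ x) / (y ⬝ᵥ y), div_pos hdot hyy, funext fun i => ?_⟩
    rw [perp_dotProduct] at hperp
    simp only [dotProduct, Fin.sum_univ_two] at hyy ⊢
    rw [Pi.smul_apply, smul_eq_mul, div_mul_eq_mul_div, eq_div_iff hyy.ne']
    fin_cases i
    · simp only [Fin.zero_eta, Fin.isValue]
      linear_combination (y 1) * hperp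
    · simp only [Fin.mk_one, Fin.isValue]
      linear_combination (-y 0) * hperp

end Plane

section IncidenceMaps

variable {V E R n : Type*} [CommRing R] [Fintype n] (src tgt : E → V)

def edgeDisp (e : E) : (V → n → R) →ₗ[R] n → R :=
  LinearMap.proj (R := R) (φ := fun _ : V => n → R) (tgt e) - LinearMap.proj (src e)

def edgeDotMap (z : E → n → R) : (V → n → R) →ₗ[R] E → R :=
  LinearMap.pi fun e => dotProductBilin R R (z e) ∘ₗ edgeDisp src tgt e

@[simp]
lemma edgeDotMap_apply (z : E → n → R) (p : V → n → R) (e : E) :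
    edgeDotMap src tgt z p e = z e ⬝ᵥ (p (tgt e) - p (src e)) := rfl

variable [Fintype E] [DecidableEq V]

def inflow {M : Type*} [AddCommGroup M] (z : E → M) (v : V) : M :=
  ∑ e with tgt e = v, z e - ∑ e with src e = v, z e

lemma map_inflow {M N F : Type*} [AddCommGroup M] [AddCommGroup N] [FunLike F M N]
    [AddMonoidHomClass F M N] (f : F) (z : E → M) (v : V) :
    f (inflow src tgt z v) = inflow src tgt (fun e => f (z e)) v := by
  simp only [inflow, map_sub, map_sum]

variable [Fintype V]

lemma sum_sum_filter_dotProduct (g : E → V) (y : E → n → R) (p : V → n → R) :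
    ∑ v, (∑ e with g e = v, y e) ⬝ᵥ p v = ∑ e, y e ⬝ᵥ p (g e) := by
  simp only [sum_dotProduct]
  rw [← sum_fiberwise univ g]
  refine sum_congr rfl fun v _ => sum_congr rfl fun e he => ?_
  rw [(mem_filter.mp he).2]

lemma dotProduct_edgeDotMap (a : E → R) (z : E → n → R) (p : V → n → R) :
    a ⬝ᵥ edgeDotMap src tgt z p = ∑ v, inflow src tgt (fun e => a e • z e) v ⬝ᵥ p v := by
  simp only [inflow, sub_dotProduct, sum_sub_distrib, sum_sum_filter_dotProduct]
  rw [dotProduct, ← sum_sub_distrib]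
  refine sum_congr rfl fun e _ => ?_
  simp only [edgeDotMap_apply, smul_dotProduct, dotProduct_sub, smul_eq_mul, mul_sub]

variable {K : Type*} [Field K] [LinearOrder K] [IsStrictOrderedRing K]

lemma edgeDotMap_surjective (z : E → n → K)
    (h : ∀ a : E → K, (∀ v, inflow src tgt (fun e => a e • z e) v = 0) → a = 0) :
    Function.Surjective (edgeDotMap src tgt z) := by
  classical
  rw [← LinearMap.dualMap_injective_iff, injective_iff_map_eq_zero]
  intro ψ hψ
  obtain ⟨a, rfl⟩ := (dotProductEquiv K E).surjective ψ
  suffices a = 0 by simp [this]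
  refine h a fun v => ?_
  set F := inflow src tgt (fun e => a e • z e)
  have := LinearMap.congr_fun hψ (Pi.single v (F v))
  simpa [dotProduct_edgeDotMap, Pi.single_apply, apply_ite, F] using this

lemma finrank_ker_edgeDotMap_add_card (z : E → n → K)
    (h : ∀ a : E → K, (∀ v, inflow src tgt (fun e => a e • z e) v = 0) → a = 0) :
    Module.finrank K (LinearMap.ker (edgeDotMap src tgt z)) + Fintype.card E =
      Fintype.card V * Fintype.card n := by
  have := (edgeDotMap src tgt z).finrank_range_add_finrank_ker
  rw [LinearMap.range_eq_top.mpr (edgeDotMap_surjective src tgt z h), finrank_top] at this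
  simpa [add_comm, Module.finrank_pi_fintype, mul_comm] using this

end IncidenceMaps

section Germs

variable {V E L : Type*} (src tgt : E → V) (leg : L → V)

/- `E ⊕ E ⊕ L` indexes the germs at the vertices: `inl e` is the germ of `e` at its source,
`inr (inl e)` the germ of `e` at its target and `inr (inr l)` the leg `l`. -/
def germVertex : E ⊕ E ⊕ L → V := Sum.elim src (Sum.elim tgt leg)

def germDir (dir : E → Fin 2 → ℤ) (dirl : L → Fin 2 → ℤ) : E ⊕ E ⊕ L → Fin 2 → ℤ :=
  Sum.elim dir (Sum.elim (-dir ·) dirl)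

def germWeight (w : E → ℕ) (wl : L → ℕ) : E ⊕ E ⊕ L → ℕ := Sum.elim w (Sum.elim w wl)

def germCoeff (a : E → ℝ) : E ⊕ E ⊕ L → ℝ := Sum.elim a (Sum.elim a 0)

variable [Fintype E] [Fintype L] [DecidableEq V]

def germsAt (v : V) : Finset (E ⊕ E ⊕ L) := univ.filter (germVertex src tgt leg · = v)

lemma sum_germsAt {M : Type*} [AddCommMonoid M] (f : E ⊕ E ⊕ L → M) (v : V) :
    ∑ γ ∈ germsAt src tgt leg v, f γ =
      ∑ e with src e = v, f (.inl e) + ∑ e with tgt e = v, f (.inr (.inl e)) +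
        ∑ l with leg l = v, f (.inr (.inr l)) := by
  rw [germsAt, sum_filter, Fintype.sum_sum_type, Fintype.sum_sum_type, sum_filter, sum_filter,
    sum_filter, add_assoc]
  rfl

lemma card_germsAt (v : V) :
    #(germsAt src tgt leg v) = #{e | src e = v} + #{e | tgt e = v} + #{l | leg l = v} := by
  simpa only [card_eq_sum_ones] using sum_germsAt src tgt leg (fun _ => 1) v

lemma sum_card_germsAt [Fintype V] :
    ∑ v, #(germsAt src tgt leg v) = 2 * Fintype.card E + Fintype.card L := by
  rw [two_mul, add_assoc, ← Fintype.card_sum, ← Fintype.card_sum, ← card_univ,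
    card_eq_sum_card_fiberwise fun γ _ => mem_univ (germVertex src tgt leg γ)]
  rfl

lemma sum_germsAt_germCoeff_smul (dir : E → Fin 2 → ℤ) (dirl : L → Fin 2 → ℤ) (a : E → ℝ)
    (v : V) :
    ∑ γ ∈ germsAt src tgt leg v, germCoeff a γ • castVec (germDir dir dirl γ) =
      -inflow src tgt (fun e => a e • castVec (dir e)) v := by
  rw [sum_germsAt, inflow, neg_sub]
  simp only [germCoeff, germDir, Sum.elim_inl, Sum.elim_inr, Pi.zero_apply, zero_smul,
    sum_const_zero, add_zero, map_neg, smul_neg, sum_neg_distrib, sub_eq_add_neg]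

end Germs

section Immersion

variable {V E L : Type} {src tgt : E → V} {leg : L → V} {dir : E → Fin 2 → ℤ}
  {dirl : L → Fin 2 → ℤ}

lemma mem_modOfType_iff {pos : V → Fin 2 → ℝ} :
    pos ∈ modOfType src tgt dir ↔
      ∀ e, ∃ t : ℝ, 0 < t ∧ pos (tgt e) - pos (src e) = t • castVec (dir e) := by
  simp [modOfType, funext_iff]

lemma modOfType_eq (hdir : ∀ e, castVec (dir e) ≠ 0) :
    modOfType src tgt dir =
      (LinearMap.ker (edgeDotMap src tgt fun e => perp (castVec (dir e))) : Set _) ∩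
        {p | ∀ e, 0 < edgeDotMap src tgt (fun e => castVec (dir e)) p e} := by
  ext p
  simp only [mem_modOfType_iff, exists_pos_smul_eq_iff (hdir _), forall_and]
  simp only [Set.mem_inter_iff, SetLike.mem_coe, LinearMap.mem_ker, funext_iff, Set.mem_ofPred_eq,
    edgeDotMap_apply, Pi.zero_apply]

lemma convex_modOfType (hdir : ∀ e, castVec (dir e) ≠ 0) : Convex ℝ (modOfType src tgt dir) := by
  rw [modOfType_eq hdir, Set.ofPred_forall]
  exact (Submodule.convex _).inter <| convex_iInter fun e =>
    convex_halfSpace_gt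
      (LinearMap.proj (R := ℝ) e ∘ₗ edgeDotMap src tgt fun e => castVec (dir e)).isLinear 0

lemma isOpen_setOf_coe_mem_modOfType [Fintype E] [Fintype V] (hdir : ∀ e, castVec (dir e) ≠ 0) :
    IsOpen {q : (LinearMap.ker
        (edgeDotMap src tgt fun e => perp (castVec (dir e)))).toAffineSubspace |
      (q : V → Fin 2 → ℝ) ∈ modOfType src tgt dir} := by
  set Ψ := edgeDotMap src tgt fun e => castVec (dir e)
  convert (isOpen_iInter_of_finite fun e => isOpen_lt (continuous_const (y := (0 : ℝ)))
    ((continuous_apply e).comp Ψ.continuous_of_finiteDimensional)).preimage continuous_subtype_val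
  ext q
  have hq := Submodule.mem_toAffineSubspace.mp q.2
  simp only [Set.mem_ofPred_eq, modOfType_eq hdir, Set.mem_inter_iff, SetLike.mem_coe, hq,
    true_and, Set.mem_preimage, Set.mem_iInter, Function.comp_apply, Ψ]

variable [Fintype E] [Fintype L] [DecidableEq V]

theorem eq_zero_of_inflow_eq_zero {w : E → ℕ} {wl : L → ℕ} {pos : V → Fin 2 → ℝ}
    (hw : ∀ γ, 0 < germWeight w wl γ) (hprim : ∀ γ, IsPrimitive (germDir dir dirl γ))
    (hval : ∀ v, #(germsAt src tgt leg v) ≤ 3)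
    (hbal : ∀ v, ∑ γ ∈ germsAt src tgt leg v, germWeight w wl γ • germDir dir dirl γ = 0)
    (hpos : pos ∈ modOfType src tgt dir)
    (himm : Function.Injective fun γ => (germVertex src tgt leg γ, germDir dir dirl γ))
    {a : E → ℝ} (ha : ∀ v, inflow src tgt (fun e => a e • castVec (dir e)) v = 0) : a = 0 := by
  by_contra ha0
  obtain ⟨e₀, he₀⟩ : ∃ e, a e ≠ 0 := by simpa [funext_iff] using ha0
  set b := germCoeff (L := L) a
  set u : E ⊕ E ⊕ L → Fin 2 → ℝ := fun γ => castVec (germDir dir dirl γ)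
  obtain ⟨ℓ, hℓ⟩ := Module.exists_dual_forall_apply_ne_zero (K := ℝ) u
    fun γ => (hprim γ).castVec_ne_zero
  obtain ⟨γ₀, hγ₀, hmax⟩ := exists_max_image (univ.filter (b · ≠ 0))
    (fun γ => ℓ (pos (germVertex src tgt leg γ))) ⟨.inl e₀, by simpa [b, germCoeff] using he₀⟩
  set v := germVertex src tgt leg γ₀
  have hdown : ∀ γ ∈ germsAt src tgt leg v, b γ ≠ 0 → ℓ (u γ) < 0 := by
    rintro (e | e | l) hγ hb
    · obtain ⟨t, ht, hdisp⟩ := mem_modOfType_iff.mp hpos e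
      rw [← (mem_filter.mp hγ).2] at hmax
      refine ℓ.map_lt_zero_of_sub_eq_smul ht hdisp ?_ (hℓ _)
      exact hmax (.inr (.inl e)) (by simpa [b, germCoeff] using hb)
    · obtain ⟨t, ht, hdisp⟩ := mem_modOfType_iff.mp hpos e
      rw [← (mem_filter.mp hγ).2] at hmax
      refine ℓ.map_lt_zero_of_sub_eq_smul (p := pos (tgt e)) (q := pos (src e)) ht ?_ ?_ (hℓ _)
      · rw [← neg_sub, hdisp, ← smul_neg, ← map_neg]
        rfl
      · exact hmax (.inl e) (by simpa [b, germCoeff] using hb)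
    · exact absurd rfl hb
  have hray : ∀ γ₁ ∈ germsAt src tgt leg v, ∀ γ₂ ∈ germsAt src tgt leg v,
      SameRay ℝ (u γ₁) (u γ₂) → γ₁ = γ₂ := fun γ₁ h₁ γ₂ h₂ h =>
    himm (Prod.ext ((mem_filter.mp h₁).2.trans (mem_filter.mp h₂).2.symm)
      ((hprim γ₁).eq_of_sameRay (hprim γ₂) h))
  have hbalℝ : ∑ γ ∈ germsAt src tgt leg v, germWeight w wl γ • u γ = 0 := by
    simpa only [map_sum, map_nsmul, map_zero] using congrArg castVec (hbal v)
  have hflow : ∑ γ ∈ germsAt src tgt leg v, b γ • u γ = 0 := by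
    rw [sum_germsAt_germCoeff_smul, ha v, neg_zero]
  exact (mem_filter.mp hγ₀).2 <| eq_zero_of_sum_smul_eq_zero_of_card_le_three ℓ (hval v) hray
    (fun γ _ => hw γ) hbalℝ hflow hdown γ₀ (mem_filter.mpr ⟨mem_univ _, rfl⟩)

end Immersion

/-- Every tropical immersion `h : Γ → ℝ²` of a 3-valent graph `Γ` of
genus `g` with `x` ends is regular: the space of tropical curves of the same
combinatorial type has dimension exactly `x + g - 1`. -/
theorem trivalent_immersions_are_regular
    (x g : ℕ) (V E L : Type) [Fintype V] [Fintype E] [Fintype L] [DecidableEq V]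
    (src tgt : E → V) (leg : L → V) (w : E → ℕ) (wl : L → ℕ)
    (dir : E → Fin 2 → ℤ) (dirl : L → Fin 2 → ℤ) (pos : V → Fin 2 → ℝ)
    -- positive natural weights and primitive integer direction vectors
    (hw : ∀ e, 0 < w e) (hwl : ∀ l, 0 < wl l)
    (hprim : ∀ e (c : ℤ), (∀ i, c ∣ dir e i) → IsUnit c)
    (hpriml : ∀ l (c : ℤ), (∀ i, c ∣ dirl l i) → IsUnit c)
    -- `Γ` is 3-valent
    (h3 : ∀ v : V,
      (univ.filter fun e : E => src e = v).card +
          (univ.filter fun e : E => tgt e = v).card +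
        (univ.filter fun l : L => leg l = v).card = 3)
    -- the balancing condition at every vertex
    (hbal : ∀ v : V,
      ((∑ e ∈ univ.filter (fun e => src e = v), (w e : ℤ) • dir e) -
          ∑ e ∈ univ.filter (fun e => tgt e = v), (w e : ℤ) • dir e) +
        ∑ l ∈ univ.filter (fun l => leg l = v), (wl l : ℤ) • dirl l = 0)
    -- `h` is an immersion: no edge is contracted (positions realize the directions),
    -- and distinct germs of edges at a common vertex point in distinct directions
    (hpos : pos ∈ modOfType src tgt dir)
    (himm : Function.Injective fun f : E ⊕ E ⊕ L =>
      (Sum.elim src (Sum.elim tgt leg) f,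
        Sum.elim (fun e => dir e) (Sum.elim (fun e i => -dir e i) fun l => dirl l) f))
    -- `x` is the number of ends and `g` the genus of `Γ`
    (hx : x = Fintype.card L)
    (hg : (g : ℤ) = (Fintype.card E : ℤ) - Fintype.card V + 1) :
    ∃ A : AffineSubspace ℝ (V → Fin 2 → ℝ),
      modOfType src tgt dir ⊆ (A : Set (V → Fin 2 → ℝ)) ∧
      Convex ℝ (modOfType src tgt dir) ∧
      IsOpen {q : A | (q : V → Fin 2 → ℝ) ∈ modOfType src tgt dir} ∧
      (Module.finrank ℝ A.direction : ℤ) = (x : ℤ) + g - 1 := by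
  have hdir (e : E) : castVec (dir e) ≠ 0 := IsPrimitive.castVec_ne_zero (hprim e)
  have hgermPrim : ∀ γ, IsPrimitive (germDir dir dirl γ) := by
    rintro (e | e | l)
    exacts [hprim e, IsPrimitive.neg (hprim e), hpriml l]
  have hgermWeight : ∀ γ, 0 < germWeight w wl γ := by
    rintro (e | e | l)
    exacts [hw e, hw e, hwl l]
  have hgermBal (v : V) :
      ∑ γ ∈ germsAt src tgt leg v, germWeight w wl γ • germDir dir dirl γ = 0 := by
    rw [sum_germsAt]
    simpa [germWeight, germDir, sub_eq_add_neg] using hbal v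
  have hflow (a : E → ℝ)
      (ha : ∀ v, inflow src tgt (fun e => a e • perp (castVec (dir e))) v = 0) : a = 0 :=
    eq_zero_of_inflow_eq_zero hgermWeight hgermPrim
      (fun v => (card_germsAt src tgt leg v).trans_le (h3 v).le) hgermBal hpos himm
      fun v => perp_injective <| by simpa [map_inflow] using ha v
  refine ⟨_, (modOfType_eq hdir).trans_subset Set.inter_subset_left, convex_modOfType hdir,
    isOpen_setOf_coe_mem_modOfType hdir, ?_⟩
  have hdim := finrank_ker_edgeDotMap_add_card src tgt _ hflow
  have hcount := sum_card_germsAt src tgt leg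
  simp only [card_germsAt, h3, sum_const, card_univ, smul_eq_mul] at hcount
  rw [Fintype.card_fin] at hdim
  rw [Submodule.toAffineSubspace_direction, hx, hg]
  omega
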